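/- arXiv:2010.03359 — 2 statements merged into one kernel-verified Lean document; each statement's English description precedes it below -/
import Mathlib

section
/- Let E be a finite-dimensional algebra over a field k of characteristic zero with Jacobson radical J, and let T ⊆ E be a subalgebra splitting E → E/J. Then for any semisimple subalgebra A ⊆ E there exists j ∈ J such that (1+j) A (1+j)⁻¹ ⊆ T. -/
/-!
In characteristic zero the trace form `B a b = tr (x ↦ a * b * x)` of a finite-dimensional
semisimple algebra `A` is nondegenerate: its radical is a left ideal, hence generated by an
idempotent `e`, and `tr (x ↦ e * x) = 0` forces `e = 0`. For a basis `bᵢ` with dual basis `fᵢ`,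
associativity of the form makes `s = ∑ bᵢ ⊗ fᵢ` satisfy `(a ⊗ 1) s = s (1 ⊗ a)`, and symmetry
gives `B (∑ bᵢ fᵢ) u = tr (x ↦ u * x) = B 1 u`, so `∑ bᵢ fᵢ = 1`: `s` is a separability
idempotent.

The splitting `T` yields an algebra retraction `π : E → T` with `x - π x ∈ J`. For `a ∈ A` the
map `d a = a - π a` takes values in `J` and satisfies `d (a * b) = π a * d b + d a * b`;
the separability idempotent turns it into an inner one, `d a = π a * w - w * a` with
`w = ∑ π bᵢ * d fᵢ ∈ J`, that is `(1 + w) * a = π a * (1 + w)`.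
-/

open TensorProduct

section TraceForm

variable (k A : Type*) [Field k] [Ring A] [Algebra k A]

noncomputable def regularTraceForm : LinearMap.BilinForm k A :=
  (LinearMap.mul k A).compr₂ (LinearMap.trace k A ∘ₗ (Algebra.lmul k A).toLinearMap)

variable {k A}

theorem regularTraceForm_apply (a b : A) :
    regularTraceForm k A a b = LinearMap.trace k A (Algebra.lmul k A (a * b)) := rfl

theorem regularTraceForm_assoc (x y w : A) :
    regularTraceForm k A (x * y) w = regularTraceForm k A x (y * w) := by
  simp only [regularTraceForm_apply, mul_assoc]

theorem regularTraceForm_comm (a b : A) : regularTraceForm k A a b = regularTraceForm k A b a := by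
  simp only [regularTraceForm_apply, map_mul, LinearMap.trace_mul_comm]

variable [FiniteDimensional k A]

theorem regularTraceForm_nondegenerate [CharZero k] [IsSemisimpleRing A] :
    (regularTraceForm k A).Nondegenerate := by
  have hrefl : (regularTraceForm k A).IsRefl := fun a b h => by rwa [regularTraceForm_comm]
  refine hrefl.nondegenerate_iff_separatingLeft.mpr ?_
  let R : Ideal A :=
    { carrier := {a | ∀ b, regularTraceForm k A a b = 0}
      add_mem' := fun hx hy b => by simp [hx b, hy b]
      zero_mem' := fun b => by simp
      smul_mem' := fun c a ha b => by
        rw [smul_eq_mul, regularTraceForm_comm, ← regularTraceForm_assoc,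
          regularTraceForm_comm, ha] }
  obtain ⟨e, he, hRe⟩ := IsSemisimpleRing.ideal_eq_span_idempotent R
  have heR : e ∈ R := hRe ▸ Ideal.subset_span rfl
  have he0 : e = 0 := by
    have hlmul : Algebra.lmul k A e = 0 :=
      LinearMap.IsIdempotentElem.eq_zero_of_trace_eq_zero (he.map (Algebra.lmul k A))
        (by simpa [regularTraceForm_apply] using heR 1)
    simpa using congrArg (· 1) hlmul
  intro a ha
  have haR : a ∈ R := ha
  rwa [hRe, he0, Set.singleton_zero, Ideal.span_zero, Ideal.mem_bot] at haR

end TraceForm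

section Casimir

variable {k A : Type*} [Field k] [Ring A] [Algebra k A]
  {B : LinearMap.BilinForm k A} (hB : B.Nondegenerate)
  {ι : Type*} [Fintype ι] [DecidableEq ι] (b : Module.Basis ι k A)

theorem LinearMap.BilinForm.basis_repr_eq_apply_dualBasis (x : A) (i : ι) :
    b.repr x i = B (B.dualBasis hB b i) x := by
  have h := B.flip.dualBasis_repr_apply hB.flip (B.dualBasis hB b) x i
  rwa [B.dualBasis_flip_dualBasis] at h

theorem LinearMap.BilinForm.trace_eq_sum_dualBasis_apply (g : A →ₗ[k] A) :
    LinearMap.trace k A g = ∑ i, B (B.dualBasis hB b i) (g (b i)) := by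
  simp only [LinearMap.trace_eq_matrix_trace k b, Matrix.trace, Matrix.diag_apply,
    LinearMap.toMatrix_apply, B.basis_repr_eq_apply_dualBasis hB]

theorem LinearMap.BilinForm.sum_mul_tmul_dualBasis
    (hassoc : ∀ x y w, B (x * y) w = B x (y * w)) (a : A) :
    ∑ i, (a * b i) ⊗ₜ[k] B.dualBasis hB b i = ∑ i, b i ⊗ₜ[k] (B.dualBasis hB b i * a) := by
  set f := B.dualBasis hB b
  calc ∑ i, (a * b i) ⊗ₜ[k] f i = ∑ i, ∑ j, B (f j) (a * b i) • (b j ⊗ₜ[k] f i) := by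
        refine Finset.sum_congr rfl fun i _ => ?_
        conv_lhs => rw [← b.sum_repr (a * b i)]
        simp only [sum_tmul, smul_tmul', B.basis_repr_eq_apply_dualBasis hB, f]
    _ = ∑ j, ∑ i, B (f j * a) (b i) • (b j ⊗ₜ[k] f i) := by
        rw [Finset.sum_comm]
        simp only [hassoc]
    _ = ∑ i, b i ⊗ₜ[k] (f i * a) := by
        refine Finset.sum_congr rfl fun j _ => ?_
        conv_rhs => rw [← (B.dualBasis hB b).sum_repr (f j * a)]
        simp only [tmul_sum, tmul_smul, LinearMap.BilinForm.dualBasis_repr_apply, f]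

end Casimir

section Separability

variable (k A : Type*) [Field k] [Ring A] [Algebra k A]

structure IsSeparabilityElement (s : A ⊗[k] A) : Prop where
  mul'_eq_one : LinearMap.mul' k A s = 1
  tmul_one_mul (a : A) : (a ⊗ₜ[k] (1 : A)) * s = s * ((1 : A) ⊗ₜ[k] a)

theorem exists_isSeparabilityElement [FiniteDimensional k A] [CharZero k] [IsSemisimpleRing A] :
    ∃ s : A ⊗[k] A, IsSeparabilityElement k A s := by
  have hB : (regularTraceForm k A).Nondegenerate := regularTraceForm_nondegenerate
  let b := Module.finBasis k A
  let f := (regularTraceForm k A).dualBasis hB b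
  refine ⟨∑ i, b i ⊗ₜ[k] f i, ⟨?_, fun a => ?_⟩⟩
  · simp only [map_sum, LinearMap.mul'_apply]
    refine sub_eq_zero.mp (hB.1 _ fun u => ?_)
    rw [map_sub, LinearMap.sub_apply, sub_eq_zero]
    calc regularTraceForm k A (∑ i, b i * f i) u
        = ∑ i, regularTraceForm k A (f i) (u * b i) := by
          simp only [map_sum, LinearMap.sum_apply, regularTraceForm_assoc]
          refine Finset.sum_congr rfl fun i _ => ?_
          rw [regularTraceForm_comm, regularTraceForm_assoc]
      _ = LinearMap.trace k A (Algebra.lmul k A u) := by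
          simp only [(regularTraceForm k A).trace_eq_sum_dualBasis_apply hB b,
            Algebra.coe_lmul_eq_mul, LinearMap.mul_apply', f]
      _ = regularTraceForm k A 1 u := by rw [regularTraceForm_apply, one_mul]
  · simp only [Finset.mul_sum, Finset.sum_mul, Algebra.TensorProduct.tmul_mul_tmul, one_mul,
      mul_one]
    exact (regularTraceForm k A).sum_mul_tmul_dualBasis hB b regularTraceForm_assoc a

end Separability

section Conjugacy

variable {k A E : Type*} [Field k] [Ring A] [Algebra k A] [Ring E] [Algebra k E]
  {s : A ⊗[k] A}

theorem IsSeparabilityElement.exists_mem_eq_mul_sub_mul (hs : IsSeparabilityElement k A s)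
    (φ ψ : A →ₐ[k] E) (I : TwoSidedIdeal E) (d : A →ₗ[k] E)
    (hd : ∀ a b, d (a * b) = φ a * d b + d a * ψ b) (hdI : ∀ a, d a ∈ I) :
    ∃ w ∈ I, ∀ a, d a = φ a * w - w * ψ a := by
  let Φ : A ⊗[k] A →ₗ[k] E := lift ((LinearMap.mul k E).compl₁₂ φ.toLinearMap d)
  have hΦ : ∀ x y, Φ (x ⊗ₜ y) = φ x * d y := fun _ _ => rfl
  have hΦI : ∀ t, Φ t ∈ I := fun t => by
    induction t using TensorProduct.induction_on with
    | zero => simp [I.zero_mem]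
    | tmul x y => exact hΦ x y ▸ I.mul_mem_left _ _ (hdI y)
    | add t t' ht ht' => simpa using I.add_mem ht ht'
  have hleft : ∀ a t, Φ ((a ⊗ₜ 1) * t) = φ a * Φ t := fun a t => by
    induction t using TensorProduct.induction_on with
    | zero => simp
    | tmul x y => simp [Algebra.TensorProduct.tmul_mul_tmul, hΦ, mul_assoc]
    | add t t' ht ht' => simp [mul_add, ht, ht']
  have hright : ∀ a t, Φ (t * (1 ⊗ₜ a)) = φ (LinearMap.mul' k A t) * d a + Φ t * ψ a :=
      fun a t => by
    induction t using TensorProduct.induction_on with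
    | zero => simp
    | tmul x y => simp [Algebra.TensorProduct.tmul_mul_tmul, hΦ, hd, mul_add, mul_assoc]
    | add t t' ht ht' => simp only [add_mul, map_add, ht, ht']; abel
  refine ⟨Φ s, hΦI s, fun a => ?_⟩
  have h := hleft a s
  rw [hs.tmul_one_mul, hright, hs.mul'_eq_one, map_one, one_mul] at h
  rw [← h, add_sub_cancel_right]

theorem IsSeparabilityElement.exists_mem_one_add_mul_eq_mul_one_add
    (hs : IsSeparabilityElement k A s) (φ ψ : A →ₐ[k] E) (I : TwoSidedIdeal E)
    (h : ∀ a, ψ a - φ a ∈ I) :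
    ∃ j ∈ I, ∀ a, (1 + j) * ψ a = φ a * (1 + j) := by
  obtain ⟨j, hj, hd⟩ := hs.exists_mem_eq_mul_sub_mul φ ψ I (ψ.toLinearMap - φ.toLinearMap)
    (fun a b => by
      simp only [LinearMap.sub_apply, AlgHom.toLinearMap_apply, map_mul]
      noncomm_ring) h
  refine ⟨j, hj, fun a => ?_⟩
  have h := hd a
  simp only [LinearMap.sub_apply, AlgHom.toLinearMap_apply, sub_eq_sub_iff_add_eq_add] at h
  rw [add_mul, one_mul, mul_add, mul_one, h, add_comm]

end Conjugacy

theorem TwoSidedIdeal.exists_mul_one_add_eq_one_of_mem_jacobson_bot {R : Type*} [Ring R] {j : R}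
    (hj : j ∈ (⊥ : TwoSidedIdeal R).jacobson) : ∃ z, z * (1 + j) = 1 := by
  obtain ⟨z, hz⟩ := TwoSidedIdeal.mem_jacobson_iff.mp hj 1
  rw [TwoSidedIdeal.mem_bot, mul_one, sub_eq_zero] at hz
  exact ⟨z, by rw [mul_add, mul_one, add_comm, hz]⟩

theorem TwoSidedIdeal.isUnit_one_add_of_mem_jacobson_bot {R : Type*} [Ring R] {j : R}
    (hj : j ∈ (⊥ : TwoSidedIdeal R).jacobson) : IsUnit (1 + j) := by
  obtain ⟨z, hz⟩ := exists_mul_one_add_eq_one_of_mem_jacobson_bot hj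
  have hz' : z = 1 + -(z * j) := by rw [← hz]; noncomm_ring
  obtain ⟨v, hv⟩ := exists_mul_one_add_eq_one_of_mem_jacobson_bot
    (TwoSidedIdeal.neg_mem _ (TwoSidedIdeal.mul_mem_left _ z j hj))
  rw [← hz'] at hv
  have hv' : v = 1 + j :=
    calc v = v * (z * (1 + j)) := by rw [hz, mul_one]
      _ = 1 + j := by rw [← mul_assoc, hv, one_mul]
  exact ⟨⟨1 + j, z, hv' ▸ hv, hz⟩, rfl⟩

theorem Subalgebra.exists_algHom_sub_mem_of_existsUnique {k E : Type*} [Field k] [Ring E]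
    [Algebra k E] {T : Subalgebra k E} {I : TwoSidedIdeal E}
    (hT : ∀ x : E, ∃! t : T, x - (t : E) ∈ I) : ∃ π : E →ₐ[k] T, ∀ x, x - π x ∈ I := by
  let q := Ideal.Quotient.mkₐ k I.asIdeal
  have hq : ∀ x y, q x = q y ↔ x - y ∈ I := fun x y => by
    rw [Ideal.Quotient.mkₐ_eq_mk, Ideal.Quotient.eq, TwoSidedIdeal.mem_asIdeal]
  have hbij : Function.Bijective (q.comp T.val) := by
    refine ⟨fun t t' h => ?_, fun y => ?_⟩
    · exact (hT t).unique ((hq _ _).mp rfl) ((hq _ _).mp h)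
    · obtain ⟨x, rfl⟩ := Ideal.Quotient.mkₐ_surjective k _ y
      obtain ⟨t, ht, -⟩ := hT x
      exact ⟨t, ((hq _ _).mpr ht).symm⟩
  let e := AlgEquiv.ofBijective _ hbij
  refine ⟨e.symm.toAlgHom.comp q, fun x => (hq _ _).mp ?_⟩
  exact (e.apply_symm_apply (q x)).symm

/-- Conjugacy part of the Wedderburn–Malcev theorem: let `E` be a finite-dimensional
algebra over a field `k` of characteristic zero with Jacobson radical `J`, and let
`T ⊆ E` be a subalgebra splitting the quotient `E → E/J`.  Then for any semisimple
subalgebra `A ⊆ E` there is `j ∈ J` such that `1 + j` is invertible and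
`(1+j) A (1+j)⁻¹ ⊆ T`. -/
theorem wedderburn_malcev_conjugacy
    (k E : Type*) [Field k] [CharZero k] [Ring E] [Algebra k E] [FiniteDimensional k E]
    (T : Subalgebra k E)
    (hT : ∀ x : E, ∃! t : T, x - (t : E) ∈ (⊥ : TwoSidedIdeal E).jacobson)
    (A : Subalgebra k E) (hA : IsSemisimpleRing A) :
    ∃ j ∈ (⊥ : TwoSidedIdeal E).jacobson, ∃ u : Eˣ,
      (u : E) = 1 + j ∧ ∀ a ∈ A, (u : E) * a * (↑u⁻¹ : E) ∈ T := by
  obtain ⟨π, hπ⟩ := Subalgebra.exists_algHom_sub_mem_of_existsUnique hT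
  obtain ⟨s, hs⟩ := exists_isSeparabilityElement k A
  obtain ⟨j, hj, hconj⟩ := hs.exists_mem_one_add_mul_eq_mul_one_add
    ((T.val.comp π).comp A.val) A.val _ fun a => hπ a
  obtain ⟨u, hu⟩ := TwoSidedIdeal.isUnit_one_add_of_mem_jacobson_bot hj
  refine ⟨j, hj, u, hu, fun a ha => ?_⟩
  have h : (u : E) * a = π a * u := by simpa [hu] using hconj ⟨a, ha⟩
  rw [h, Units.mul_inv_cancel_right]
  exact (π a).2
end

section
/- An element t ∈ ℂ transcendental over a countable subfield k ⊆ ℂ has uncountably many images under field automorphisms of ℂ fixing k; equivalently, the Aut(ℂ/k)-orbit of t is countable if and only if t is algebraic over k. -/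
/-!
An automorphism fixing `k` permutes the roots of the minimal polynomial of `t`, so the orbit of
an algebraic element is finite. Conversely, two transcendental elements `x`, `y` extend to
transcendence bases, which are equipotent; a bijection of the bases sending `x` to `y` induces a
`k`-isomorphism between the generated purely transcendental subrings, and it extends to `ℂ`
because `ℂ` is an algebraic closure of both. Hence the orbit of a transcendental `t` contains
every transcendental number, and these are uncountable since only countably many complex
numbers are algebraic over a countable field.
-/

theorem exists_isTranscendenceBasis_mem {R A : Type*} [CommRing R] [CommRing A] [Algebra R A]
    {x : A} (hx : Transcendental R x) :
    ∃ s : Set A, x ∈ s ∧ IsTranscendenceBasis R ((↑) : s → A) := by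
  obtain ⟨s, hxs, hs⟩ := exists_isTranscendenceBasis_superset (R := R) (s := {x})
    ((algebraicIndependent_singleton_iff (⟨x, rfl⟩ : ({x} : Set A))).2 hx)
  exact ⟨s, hxs rfl, hs⟩

namespace IsAlgClosed

variable {K L : Type*} [Field K] [Field L] [IsAlgClosed L] [Algebra K L]

theorem exists_algEquiv_of_isTranscendenceBasis {ι κ : Type*} {v : ι → L} {w : κ → L}
    (hv : IsTranscendenceBasis K v) (hw : IsTranscendenceBasis K w) (e : ι ≃ κ) :
    ∃ σ : L ≃ₐ[K] L, ∀ i, σ (v i) = w (e i) := by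
  let := isAlgClosure_of_transcendence_basis v hv
  let := isAlgClosure_of_transcendence_basis w hw
  let φ : Algebra.adjoin K (Set.range v) ≃ₐ[K] Algebra.adjoin K (Set.range w) :=
    hv.1.aevalEquiv.symm.trans ((MvPolynomial.renameEquiv K e).trans hw.1.aevalEquiv)
  let σ := IsAlgClosure.equivOfEquiv L L φ.toRingEquiv
  have hσ : ∀ a, σ (algebraMap _ L a) = algebraMap _ L (φ a) :=
    IsAlgClosure.equivOfEquiv_algebraMap L L φ.toRingEquiv
  refine ⟨AlgEquiv.ofRingEquiv (f := σ) fun a => ?_, fun i => ?_⟩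
  · simpa only [φ.commutes, ← IsScalarTower.algebraMap_apply] using hσ (algebraMap K _ a)
  · simpa [φ, hv.1.algebraMap_aevalEquiv, hw.1.algebraMap_aevalEquiv]
      using hσ (hv.1.aevalEquiv (MvPolynomial.X i))

theorem exists_algEquiv_apply_eq_of_transcendental {x y : L} (hx : Transcendental K x)
    (hy : Transcendental K y) : ∃ σ : L ≃ₐ[K] L, σ x = y := by
  classical
  obtain ⟨s, hxs, hs⟩ := exists_isTranscendenceBasis_mem hx
  obtain ⟨t, hyt, ht⟩ := exists_isTranscendenceBasis_mem hy
  obtain ⟨e⟩ := Cardinal.eq.1 (hs.cardinalMk_eq ht)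
  obtain ⟨σ, hσ⟩ := exists_algEquiv_of_isTranscendenceBasis hs ht
    (e.trans (Equiv.swap (e ⟨x, hxs⟩) ⟨y, hyt⟩))
  exact ⟨σ, by simpa using hσ ⟨x, hxs⟩⟩

end IsAlgClosed

theorem IsAlgebraic.finite_range_algHom_apply {K L M : Type*} [Field K] [Field L] [CommRing M]
    [IsDomain M] [Algebra K L] [Algebra K M] {x : L} (hx : IsAlgebraic K x) :
    (Set.range fun σ : L →ₐ[K] M => σ x).Finite :=
  ((minpoly K x).rootSet_finite M).subset <| by
    rintro _ ⟨σ, rfl⟩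
    rw [Polynomial.mem_rootSet_of_ne (minpoly.ne_zero hx.isIntegral),
      Polynomial.aeval_algHom_apply, minpoly.aeval, map_zero]

theorem Transcendental.not_countable_setOf (R A : Type*) [CommRing R] [IsDomain R] [CommRing A]
    [IsDomain A] [Algebra R A] [Module.IsTorsionFree R A] [Countable R] [Uncountable A] :
    ¬ {x : A | Transcendental R x}.Countable := fun h =>
  Set.not_countable_univ <| ((Algebraic.countable R A).union h).mono fun _ _ => em _

theorem Subfield.setOf_exists_ringEquiv_apply_eq {L : Type*} [Field L] (k : Subfield L) (x : L) :
    {y : L | ∃ σ : L ≃+* L, (∀ a ∈ k, σ a = a) ∧ σ x = y} =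
      Set.range fun σ : L ≃ₐ[k] L => σ x := by
  ext y
  constructor
  · rintro ⟨σ, hσ, rfl⟩
    exact ⟨AlgEquiv.ofRingEquiv (f := σ) fun a => hσ a a.2, rfl⟩
  · rintro ⟨σ, rfl⟩
    exact ⟨σ.toRingEquiv, fun a ha => σ.commutes ⟨a, ha⟩, rfl⟩

/-- Let `k ⊆ ℂ` be a countable subfield and `t ∈ ℂ`.  Then the orbit of `t` under field
automorphisms of `ℂ` fixing `k` pointwise is countable if and only if `t` is algebraic
over `k`; equivalently, a transcendental element has uncountably many conjugates. -/
theorem countable_orbit_iff_algebraic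
    (k : Subfield ℂ) (hk : (k : Set ℂ).Countable) (t : ℂ) :
    Set.Countable {x : ℂ | ∃ σ : ℂ ≃+* ℂ, (∀ a ∈ k, σ a = a) ∧ σ t = x} ↔
      IsAlgebraic k t := by
  have : Countable k := hk.to_subtype
  have : Uncountable ℂ := Complex.ofReal_injective.uncountable
  rw [k.setOf_exists_ringEquiv_apply_eq t]
  refine ⟨fun h => ?_, fun ht => ?_⟩
  · by_contra ht
    exact Transcendental.not_countable_setOf k ℂ <| h.mono fun _ hy =>
      IsAlgClosed.exists_algEquiv_apply_eq_of_transcendental ht hy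
  · refine (ht.finite_range_algHom_apply (M := ℂ)).countable.mono ?_
    rintro _ ⟨σ, rfl⟩
    exact ⟨σ.toAlgHom, rfl⟩
end
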